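/- Let (x*, y*) satisfy A_ff x* + A_fs y* = b1 and A_sf x* + A_ss y* = b2, and let (x_p*, y_p*) ∈ X × Y satisfy the projected equations Π_X(A_ff x_p* + A_fs y_p* − b1) = 0 and Π_Y(A_sf x_p* + A_ss y_p* − b2) = 0. Suppose U_Xᵀ A_ff U_X is invertible and set c1 := U_X (U_Xᵀ A_ff U_X)^{-1} U_Xᵀ. Then the approximation-error identity x_p* − x* = (I − c1 A_ff)(Π_X x* − x*) − c1 A_fs (y_p* − y*) holds. -/

import Mathlib

/-!
Since `U_X` has orthonormal columns, `c1 = U_X (U_Xᵀ A_ff U_X)⁻¹ U_Xᵀ` satisfies `c1 A_ff U_X = U_X` and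
`c1 Π_X = c1`. The first makes `c1 A_ff` the identity on `X ∋ x_p*`; the second lets `c1` be applied to the
projected equation, giving `c1 A_ff x_p* + c1 A_fs y_p* = c1 b1 = c1 A_ff x* + c1 A_fs y*`, i.e.
`x_p* = c1 A_ff x* - c1 A_fs (y_p* - y*)`. Using `c1 A_ff Π_X = Π_X` once more, this is the identity.
-/

open Matrix MeasureTheory Finset
open scoped BigOperators

noncomputable section
namespace TTSA

abbrev E (n : ℕ) : Type := EuclideanSpace ℝ (Fin n)

def mv {k l : ℕ} (M : Matrix (Fin k) (Fin l) ℝ) (x : E l) : E k :=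
  Matrix.toEuclideanLin M x

def specNorm {k l : ℕ} (M : Matrix (Fin k) (Fin l) ℝ) : ℝ :=
  ‖LinearMap.toContinuousLinearMap (Matrix.toEuclideanLin M)‖

def sigmaMin {k : ℕ} (M : Matrix (Fin k) (Fin k) ℝ) : ℝ :=
  sInf ((fun v : E k => ‖mv M v‖) '' {v | ‖v‖ = 1})

def resolvent {k l : ℕ} (U : Matrix (Fin k) (Fin l) ℝ) (A : Matrix (Fin k) (Fin k) ℝ) :
    Matrix (Fin k) (Fin k) ℝ :=
  U * (Uᵀ * A * U)⁻¹ * Uᵀ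

section MatrixVector

variable {k l p : ℕ}

lemma mv_mul (M : Matrix (Fin k) (Fin l) ℝ) (N : Matrix (Fin l) (Fin p) ℝ) (x : E p) :
    mv (M * N) x = mv M (mv N x) := by
  simp [mv]

lemma mv_one (x : E k) : mv (1 : Matrix (Fin k) (Fin k) ℝ) x = x := by
  simp [mv]

lemma sub_mv (M N : Matrix (Fin k) (Fin l) ℝ) (x : E l) : mv (M - N) x = mv M x - mv N x := by
  simp [mv]

lemma mv_add (M : Matrix (Fin k) (Fin l) ℝ) (x y : E l) : mv M (x + y) = mv M x + mv M y :=
  map_add (Matrix.toEuclideanLin M) x y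

lemma mv_sub (M : Matrix (Fin k) (Fin l) ℝ) (x y : E l) : mv M (x - y) = mv M x - mv M y :=
  map_sub (Matrix.toEuclideanLin M) x y

lemma mv_zero (M : Matrix (Fin k) (Fin l) ℝ) : mv M (0 : E l) = 0 :=
  map_zero (Matrix.toEuclideanLin M)

end MatrixVector

section Resolvent

variable {k l : ℕ} (U : Matrix (Fin k) (Fin l) ℝ) (A : Matrix (Fin k) (Fin k) ℝ)

lemma resolvent_mul_mul_self (h : IsUnit (Uᵀ * A * U)) : resolvent U A * A * U = U := by
  have hinv : (Uᵀ * A * U)⁻¹ * (Uᵀ * A * U) = 1 :=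
    Matrix.nonsing_inv_mul _ ((Matrix.isUnit_iff_isUnit_det _).mp h)
  calc resolvent U A * A * U = U * ((Uᵀ * A * U)⁻¹ * (Uᵀ * A * U)) := by
        simp only [resolvent, Matrix.mul_assoc]
    _ = U := by rw [hinv, Matrix.mul_one]

lemma resolvent_mul_proj (hU : Uᵀ * U = 1) : resolvent U A * (U * Uᵀ) = resolvent U A := by
  simp only [resolvent, Matrix.mul_assoc, ← Matrix.mul_assoc Uᵀ U Uᵀ, hU, Matrix.one_mul]

lemma mv_resolvent_mul_of_mem_range (h : IsUnit (Uᵀ * A * U)) {x : E k}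
    (hx : x ∈ Set.range (mv U)) : mv (resolvent U A * A) x = x := by
  obtain ⟨w, rfl⟩ := hx
  rw [← mv_mul, resolvent_mul_mul_self U A h]

lemma mv_resolvent_of_mv_proj_eq_zero (hU : Uᵀ * U = 1) {v : E k} (hv : mv (U * Uᵀ) v = 0) :
    mv (resolvent U A) v = 0 := by
  rw [← resolvent_mul_proj U A hU, mv_mul, hv, mv_zero]

end Resolvent

lemma eq_sub_of_projected_equation {n m d : ℕ}
    (Aff : Matrix (Fin n) (Fin n) ℝ) (Afs : Matrix (Fin n) (Fin m) ℝ) (b1 : E n)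
    (UX : Matrix (Fin n) (Fin d) ℝ) (hUX : UXᵀ * UX = 1) (h1 : IsUnit (UXᵀ * Aff * UX))
    (xs : E n) (ys : E m) (hxs : mv Aff xs + mv Afs ys = b1)
    (xp : E n) (yp : E m) (hxp : xp ∈ Set.range (mv UX))
    (hsolx : mv (UX * UXᵀ) (mv Aff xp + mv Afs yp - b1) = 0) :
    xp = mv (resolvent UX Aff * Aff) xs - mv (resolvent UX Aff * Afs) (yp - ys) := by
  have hres := mv_resolvent_of_mv_proj_eq_zero UX Aff hUX hsolx
  rw [← hxs, mv_sub, mv_add, mv_add, sub_eq_zero, ← mv_mul, ← mv_mul, ← mv_mul, ← mv_mul,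
    mv_resolvent_mul_of_mem_range UX Aff h1 hxp] at hres
  rw [mv_sub, eq_sub_iff_add_eq, ← add_sub_assoc, hres, add_sub_cancel_right]

theorem fast_approximation_identity_general {n m d : ℕ}
    (Aff : Matrix (Fin n) (Fin n) ℝ) (Afs : Matrix (Fin n) (Fin m) ℝ)
    (b1 : E n)
    (UX : Matrix (Fin n) (Fin d) ℝ)
    (hUX : UXᵀ * UX = 1)
    (xs : E n) (ys : E m)
    (hxs : mv Aff xs + mv Afs ys = b1)
    (xp : E n) (yp : E m)
    (hxp : xp ∈ Set.range (mv UX))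
    (hsolx : mv (UX * UXᵀ) (mv Aff xp + mv Afs yp - b1) = 0)
    (h1 : IsUnit (UXᵀ * Aff * UX)) :
    xp - xs = mv (1 - resolvent UX Aff * Aff) (mv (UX * UXᵀ) xs - xs) -
      mv (resolvent UX Aff * Afs) (yp - ys) := by
  have hproj : mv (resolvent UX Aff * Aff) (mv (UX * UXᵀ) xs) = mv (UX * UXᵀ) xs :=
    mv_resolvent_mul_of_mem_range UX Aff h1 (by rw [mv_mul]; exact Set.mem_range_self _)
  rw [eq_sub_of_projected_equation Aff Afs b1 UX hUX h1 xs ys hxs xp yp hxp hsolx, sub_mv,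
    mv_one, mv_sub (resolvent UX Aff * Aff), hproj]
  abel

/-- approximation-error identity for the fast component:
`x_p* - x* = (I - c1 A_ff)(Π_X x* - x*) - c1 A_fs (y_p* - y*)`,
with `c1 = resolvent U_X A_ff`. -/
theorem fast_approximation_identity {n m d r : ℕ}
    (Aff : Matrix (Fin n) (Fin n) ℝ) (Afs : Matrix (Fin n) (Fin m) ℝ)
    (Asf : Matrix (Fin m) (Fin n) ℝ) (Ass : Matrix (Fin m) (Fin m) ℝ)
    (b1 : E n) (b2 : E m)
    (UX : Matrix (Fin n) (Fin d) ℝ) (UY : Matrix (Fin m) (Fin r) ℝ)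
    (hUX : UXᵀ * UX = 1) (hUY : UYᵀ * UY = 1)
    (xs : E n) (ys : E m)
    (hxs : mv Aff xs + mv Afs ys = b1) (hys : mv Asf xs + mv Ass ys = b2)
    (xp : E n) (yp : E m)
    (hxp : xp ∈ Set.range (mv UX)) (hyp : yp ∈ Set.range (mv UY))
    (hsolx : mv (UX * UXᵀ) (mv Aff xp + mv Afs yp - b1) = 0)
    (hsoly : mv (UY * UYᵀ) (mv Asf xp + mv Ass yp - b2) = 0)
    (h1 : IsUnit (UXᵀ * Aff * UX)) :
    xp - xs = mv (1 - resolvent UX Aff * Aff) (mv (UX * UXᵀ) xs - xs) -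
      mv (resolvent UX Aff * Afs) (yp - ys) :=
  fast_approximation_identity_general Aff Afs b1 UX hUX xs ys hxs xp yp hxp hsolx h1

end TTSA
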